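/- Let φ=sup_n φ_n be the potential constructed from the subshifts X_n with constants c_n and the decreasing sequence δ_j=(10+3 log₂ j)/(α j), where 0<α<β_1. Then for every n∈ℕ the restriction of φ to X_n is constantly equal to c_n. -/

import Mathlib

open MeasureTheory Real Filter Topology

noncomputable section

namespace PhaseTransitions

/-! ### Measure-theoretic entropy and topological pressure -/

/-- Base-2 entropy of the (finite, measurable) partition of `X` induced by an
observable `f : X → F` with finitely many values. -/
def entOfObs {X F : Type*} [MeasurableSpace X] [Fintype F]
    (μ : Measure X) (f : X → F) : ℝ :=
  ∑ a : F, -((μ (f ⁻¹' {a})).toReal * Real.logb 2 (μ (f ⁻¹' {a})).toReal)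

/-- Entropy of the transformation `T` with respect to the partition induced by
the observable `f` : the limit (= infimum) of `(1/n) H(⋁_{i<n} T⁻ⁱ f)`. -/
def entObsT {X F : Type*} [MeasurableSpace X] [Fintype F]
    (T : X → X) (μ : Measure X) (f : X → F) : ℝ :=
  ⨅ n : ℕ, entOfObs μ (fun x => fun i : Fin (n + 1) => f (T^[(i : ℕ)] x)) / (n + 1)

/-- Kolmogorov–Sinai (measure-theoretic) entropy, base 2: supremum over all
finite measurable partitions (encoded by observables with values in `Fin k`). -/
def kolSinai {X : Type*} [MeasurableSpace X] (T : X → X) (μ : Measure X) : ℝ :=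
  ⨆ k : ℕ, ⨆ f : {f : X → Fin k // Measurable f}, entObsT T μ f.1

/-- `μ` is a `T`-invariant Borel probability measure. -/
def InvProb {X : Type*} [MeasurableSpace X] (T : X → X) (μ : Measure X) : Prop :=
  IsProbabilityMeasure μ ∧ MeasurePreserving T μ μ

/-- Topological pressure, via the variational principle. -/
def pressure {X : Type*} [MeasurableSpace X] (T : X → X) (φ : X → ℝ) : ℝ :=
  ⨆ μ : {μ : Measure X // InvProb T μ}, (kolSinai T μ.1 + ∫ x, φ x ∂μ.1)

/-- An equilibrium state of the potential `φ`: an invariant probability measure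
attaining the supremum in the variational principle. -/
def IsEquilibrium {X : Type*} [MeasurableSpace X] (T : X → X) (φ : X → ℝ)
    (μ : Measure X) : Prop :=
  InvProb T μ ∧ kolSinai T μ + ∫ x, φ x ∂μ = pressure T φ

/-! ### The two-sided full shift on two symbols -/

/-- The two-sided full shift space `{0,1}^ℤ`. -/
abbrev Bin : Type := ℤ → Bool

/-- The (left) shift map. -/
def shift (x : Bin) : Bin := fun n => x (n + 1)

/-- `x` is a bi-infinite free concatenation of words from `W`: there is a
bi-infinite increasing sequence of cut points, cofinal in both directions, such
that consecutive cut points delimit words of `W`. -/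
def IsFreeConcat (W : Set (List Bool)) (x : Bin) : Prop :=
  ∃ t : ℤ → ℤ, StrictMono t ∧ (∀ N : ℤ, ∃ k, N < t k) ∧ (∀ N : ℤ, ∃ k, t k < N) ∧
    ∀ k : ℤ, ∃ w ∈ W, t (k + 1) = t k + w.length ∧
      ∀ (i : ℕ) (h : i < w.length), x (t k + (i : ℤ)) = w.get ⟨i, h⟩

/-- The coded system generated by the word set `W`: the closure of the set of
free concatenations of words from `W`. -/
def codedSystem (W : Set (List Bool)) : Set Bin :=
  closure {x | IsFreeConcat W x}

/-- The generating set `W_n = {0^{2^n-1}1, 1^{2^n-1}0}`. -/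
def genWords (n : ℕ) : Set (List Bool) :=
  {List.replicate (2 ^ n - 1) false ++ [true], List.replicate (2 ^ n - 1) true ++ [false]}

/-- The subshift `X_n`, the coded system generated by `W_n`. -/
def Xsub (n : ℕ) : Set Bin := codedSystem (genWords n)

/-- The set of words of length `j` in the language of `Y ⊆ {0,1}^ℤ`. -/
def langWord (Y : Set Bin) (j : ℕ) : Set (Fin j → Bool) :=
  {w | ∃ x ∈ Y, ∀ i : Fin j, x ((i : ℕ) : ℤ) = w i}

/-! ### The metric and the potential -/

open Classical in
/-- The metric `d(x,y) = 2^{-inf{|n| : x_n ≠ y_n}}` on the shift space. -/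
def binDist (x y : Bin) : ℝ :=
  if x = y then 0
  else (1 / 2 : ℝ) ^ sInf {m : ℕ | ∃ i : ℤ, i.natAbs = m ∧ x i ≠ y i}

/-- Distance from a point to a set. -/
def distToSet (x : Bin) (S : Set Bin) : ℝ :=
  sInf ((fun y => binDist x y) '' S)

/-- `δ_j = (10 + 3 log₂ j)/(α j)`. -/
def deltaSeq (α : ℝ) (j : ℕ) : ℝ := (10 + 3 * Real.logb 2 j) / (α * j)

/-- The drop `δ` as a function of the distance `r`: if `r = 2^{-j}` this equals
`δ_j = (10 + 3 log₂ j)/(α j)`, and `δ = 0` when `r = 0` (i.e. `δ_∞ = 0`). -/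
def deltaOf (α : ℝ) (r : ℝ) : ℝ :=
  if r = 0 then 0
  else (10 + 3 * Real.logb 2 (-Real.logb 2 r)) / (α * (-Real.logb 2 r))

/-- `c_n = -∑_{j=n}^∞ 1/(2^{j+1} β_j)`. -/
def cseq (β : ℕ → ℝ) (n : ℕ) : ℝ :=
  -∑' k : ℕ, 1 / (2 ^ (n + k + 1) * β (n + k))

/-- `φ_n(x) = c_n − δ_j` when `dist(x, X_n) = 2^{-j}` (and `φ_n = c_n` on `X_n`). -/
def phiN (α : ℝ) (c : ℕ → ℝ) (n : ℕ) (x : Bin) : ℝ :=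
  c n - deltaOf α (distToSet x (Xsub n))

/-- The potential `φ = sup_{n ≥ 1} φ_n`. -/
def phi (α : ℝ) (c : ℕ → ℝ) (x : Bin) : ℝ :=
  ⨆ n : ℕ, phiN α c (n + 1) x

/-- The constants of the finite (truncated) construction:
`c_{n} = c_1 + ∑_{j=1}^{n-1} 1/(2^{j+1} β_j)`. -/
def cseqFin (c1 : ℝ) (β : ℕ → ℝ) (n : ℕ) : ℝ :=
  c1 + ∑ j ∈ Finset.Ico 1 n, 1 / (2 ^ (j + 1) * β j)

/-- The truncated potential `φ = max{φ_n : 1 ≤ n ≤ N+1}`. -/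
def phiFin (α : ℝ) (c : ℕ → ℝ) (N : ℕ) (x : Bin) : ℝ :=
  ⨆ n : Fin (N + 1), phiN α c ((n : ℕ) + 1) x

/-! ### Measures of maximal entropy and relative pressure -/

/-- `μ` is a measure of maximal entropy for the subsystem `Y` (a `T`-invariant
probability measure giving full mass to `Y` and maximizing entropy among such). -/
def IsMaxEntropyOn (Y : Set Bin) (μ : Measure Bin) : Prop :=
  InvProb shift μ ∧ μ Y = 1 ∧
    ∀ ν : Measure Bin, InvProb shift ν → ν Y = 1 → kolSinai shift ν ≤ kolSinai shift μ

/-- The topological pressure of the subsystem `Y` (computed via the variational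
principle over invariant measures giving full mass to `Y`). -/
def pressureOn (Y : Set Bin) (φ : Bin → ℝ) : ℝ :=
  ⨆ μ : {μ : Measure Bin // InvProb shift μ ∧ μ Y = 1},
    (kolSinai shift μ.1 + ∫ x, φ x ∂μ.1)

/-! ### The pin-sequence space -/

/-- `Y`, the closure of the union of the `X_n`, `n ≥ 1`. -/
def Yset : Set Bin := closure (⋃ n : ℕ, Xsub (n + 1))

/-- The word `x_i ⋯ x_j` belongs to the language of `Y`. -/
def SegIn (x : Bin) (i j : ℤ) (Y : Set Bin) : Prop :=
  ∃ y ∈ Y, ∀ m : ℤ, i ≤ m → m ≤ j → y (m - i) = x m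

/-- The word `x_0 ⋯ x_{j-1}` belongs to the language of `Y`. -/
def WordIn (x : Bin) (j : ℕ) (Y : Set Bin) : Prop :=
  ∃ y ∈ Y, ∀ m : ℕ, m < j → y (m : ℤ) = x (m : ℤ)

/-- The pin-sequence space `P ⊆ X × {0,1}^ℤ`: pinless stretches of `x` lie in the
language of `Y`, and stretches between two pins do not. -/
def PinSpace : Set (Bin × Bin) :=
  {p | (∀ i j : ℤ, i < j → (∀ k : ℤ, i < k → k ≤ j → p.2 k = false) → SegIn p.1 i j Yset) ∧
       (∀ i j : ℤ, i < j → p.2 i = true → p.2 j = true → ¬ SegIn p.1 i j Yset)}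

/-- The product shift `T̄(x,z) = (Tx, Tz)`. -/
def shift2 (p : Bin × Bin) : Bin × Bin := (shift p.1, shift p.2)

/-- The set `A = {(x,z) ∈ P : z_0 = 1}`. -/
def Aset : Set (Bin × Bin) := {p | p ∈ PinSpace ∧ p.2 0 = true}

/-- The first return time to `A`. -/
def retTime (p : Bin × Bin) : ℕ :=
  sInf {k : ℕ | 1 ≤ k ∧ shift2^[k] p ∈ Aset}

/-- The induced (first-return) map `T̄_A`. -/
def inducedMap (p : Bin × Bin) : Bin × Bin := shift2^[retTime p] p

/-- `Q_j`, the set of points of `A` with first return time `j`. -/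
def Qset (j : ℕ) : Set (Bin × Bin) := {p | p ∈ Aset ∧ retTime p = j}

/-- `Q_{j,s}` for `1 ≤ s ≤ ⌊log₂ j⌋ - 3`: points of `Q_j` whose initial block of
length `j` lies in the language of `X_s`; the class `s = 0` collects the blocks
belonging to some `X_{s'}` with `s' ≥ ⌊log₂ j⌋ - 2`. -/
def Qjs (j s : ℕ) : Set (Bin × Bin) :=
  if s = 0 then
    {p | p ∈ Qset j ∧ ∃ s' : ℕ, 1 ≤ s' ∧ Nat.log 2 j - 2 ≤ s' ∧ WordIn p.1 j (Xsub s')}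
  else {p | p ∈ Qset j ∧ WordIn p.1 j (Xsub s)}

/-!
On `X_n` the distance to `X_n` vanishes, so `φ_n = c_n` there, and it remains to bound every
other `φ_m` by `c_n`. For `m < n` this holds because `δ ≥ 0` and `c_m ≤ c_n`. For `m > n`, a point
of `X_n` has two symbol changes at distance `2^n` inside the window `[-1, 2^{n+1}]`, whereas in a
point of `X_m` every symbol change is followed by `2^m - 2` equal symbols. Hence
`dist(x, X_m) ≥ 2^{-2^{n+1}}`, so `δ ≥ 10/(α 2^{n+1}) ≥ 1/(β_1 2^n) ≥ -c_n`, and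
`φ_m ≤ c_m - δ ≤ c_n` because `c_m ≤ 0`.
-/

lemma getElem_replicate_append_singleton {k i : ℕ} {c d : Bool}
    (h : i < (List.replicate k c ++ [d]).length) :
    (List.replicate k c ++ [d])[i] = if i = k then d else c := by
  have hik : i ≤ k := by simpa [Nat.lt_succ_iff] using h
  rcases hik.lt_or_eq with hlt | rfl
  · rw [List.getElem_append_left (by simpa using hlt), if_neg hlt.ne]
    exact List.getElem_replicate _
  · simp

lemma mem_genWords {n : ℕ} {w : List Bool} :
    w ∈ genWords n ↔ ∃ b : Bool, w = List.replicate (2 ^ n - 1) b ++ [!b] := by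
  constructor
  · rintro (rfl | rfl)
    exacts [⟨false, rfl⟩, ⟨true, rfl⟩]
  · rintro ⟨_ | _, rfl⟩
    exacts [Or.inl rfl, Or.inr rfl]

lemma length_of_mem_genWords {n : ℕ} {w : List Bool} (hw : w ∈ genWords n) :
    w.length = 2 ^ n := by
  obtain ⟨b, rfl⟩ := mem_genWords.1 hw
  simp [Nat.sub_add_cancel Nat.one_le_two_pow]

lemma IsFreeConcat.exists_periodic_cuts {W : Set (List Bool)} {Q : ℕ}
    (hW : ∀ w ∈ W, w.length = Q) {x : Bin} (hx : IsFreeConcat W x) :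
    ∃ t₀ : ℤ, ∀ k : ℤ, ∃ w ∈ W,
      ∀ (i : ℕ) (h : i < w.length), x (t₀ + k * Q + i) = w.get ⟨i, h⟩ := by
  obtain ⟨t, -, -, -, hw⟩ := hx
  have hstep : ∀ k, t (k + 1) = t k + Q := fun k => by
    obtain ⟨w, hwW, hlen, -⟩ := hw k
    rw [hlen, hW w hwW]
  have hlin : ∀ k, t k = t 0 + k * Q := by
    intro k
    induction k using Int.induction_on with
    | zero => simp
    | succ k ih => rw [hstep, ih]; ring
    | pred k ih =>
      have := hstep (-k - 1)
      rw [sub_add_cancel, ih] at this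
      linarith
  refine ⟨t 0, fun k => ?_⟩
  obtain ⟨w, hwW, -, hval⟩ := hw k
  exact ⟨w, hwW, fun i h => hlin k ▸ hval i h⟩

def IsMarkedBlocks (Q : ℤ) (y : Bin) : Prop :=
  ∃ (t₀ : ℤ) (b : ℤ → Bool), ∀ k i : ℤ, 0 ≤ i → i < Q →
    y (t₀ + k * Q + i) = if i = Q - 1 then !b k else b k

lemma IsFreeConcat.isMarkedBlocks {n : ℕ} {x : Bin} (hx : IsFreeConcat (genWords n) x) :
    IsMarkedBlocks (2 ^ n) x := by
  obtain ⟨t₀, hcut⟩ := hx.exists_periodic_cuts fun _ => length_of_mem_genWords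
  choose w hwW hval using hcut
  choose b hb using fun k => mem_genWords.1 (hwW k)
  refine ⟨t₀, b, fun k i hi0 hiQ => ?_⟩
  lift i to ℕ using hi0
  have hi : i < (w k).length := by
    rw [length_of_mem_genWords (hwW k)]; exact_mod_cast hiQ
  have := hval k i hi
  push_cast at this
  rw [this, List.get_eq_getElem]
  simp only [hb k, getElem_replicate_append_singleton]
  congr 1
  rw [eq_iff_iff, ← Nat.cast_inj (R := ℤ), Nat.cast_sub Nat.one_le_two_pow]
  push_cast; rfl

lemma exists_eq_add_mul_add (t₀ : ℤ) {Q : ℤ} (hQ : 0 < Q) (p : ℤ) :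
    ∃ k o : ℤ, 0 ≤ o ∧ o < Q ∧ p = t₀ + k * Q + o :=
  ⟨(p - t₀) / Q, (p - t₀) % Q, Int.emod_nonneg _ hQ.ne', Int.emod_lt_of_pos _ hQ,
    by linarith [Int.mul_ediv_add_emod (p - t₀) Q]⟩

namespace IsMarkedBlocks

variable {Q : ℤ} {y : Bin}

lemma exists_const_of_ne (hy : IsMarkedBlocks Q y) (hQ : 2 ≤ Q) {p : ℤ}
    (hp : y (p - 1) ≠ y p) : ∃ c, ∀ i : ℤ, 1 ≤ i → i ≤ Q - 2 → y (p + i) = c := by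
  obtain ⟨t₀, b, hb⟩ := hy
  obtain ⟨k, o, ho0, hoQ, rfl⟩ := exists_eq_add_mul_add t₀ (by omega : 0 < Q) p
  -- a symbol changes only at the last position of a block or at the first one of the next
  by_cases hlast : o = Q - 1
  · refine ⟨b (k + 1), fun i hi1 hiQ => ?_⟩
    rw [show t₀ + k * Q + o + i = t₀ + (k + 1) * Q + (i - 1) by rw [hlast]; ring,
      hb _ _ (by omega) (by omega), if_neg (by omega)]
  by_cases hfirst : o = 0
  · refine ⟨b k, fun i hi1 hiQ => ?_⟩
    rw [hfirst, add_zero, hb _ _ (by omega) (by omega), if_neg (by omega)]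
  · refine absurd ?_ hp
    rw [show t₀ + k * Q + o - 1 = t₀ + k * Q + (o - 1) by ring,
      hb _ _ (by omega) (by omega), hb _ _ ho0 hoQ, if_neg (by omega), if_neg hlast]

lemma exists_ne_pair (hy : IsMarkedBlocks Q y) (hQ : 2 ≤ Q) :
    ∃ p, 0 ≤ p ∧ p < Q ∧ y (p - 1) ≠ y p ∧ y (p + Q - 1) ≠ y (p + Q) := by
  obtain ⟨t₀, b, hb⟩ := hy
  obtain ⟨k, o, ho0, hoQ, h0⟩ := exists_eq_add_mul_add t₀ (by omega : 0 < Q) 0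
  have hmark : ∀ j, y (t₀ + j * Q + (Q - 1) - 1) ≠ y (t₀ + j * Q + (Q - 1)) := by
    intro j
    rw [show t₀ + j * Q + (Q - 1) - 1 = t₀ + j * Q + (Q - 2) by ring,
      hb j _ (by omega) (by omega), hb j _ (by omega) (by omega), if_neg (by omega), if_pos rfl]
    exact (Bool.not_ne_self _).symm
  refine ⟨t₀ + k * Q + (Q - 1), by linarith, by linarith, hmark k, ?_⟩
  convert hmark (k + 1) using 2 <;> ring

end IsMarkedBlocks

lemma exists_eqOn_window_of_mem_closure {S : Set Bin} {z : Bin} (hz : z ∈ closure S) (L : ℕ) :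
    ∃ z' ∈ S, ∀ i : ℤ, i.natAbs ≤ L → z' i = z i := by
  have hU : IsOpen ((Finset.Icc (-(L : ℤ)) L : Set ℤ).pi fun i => {z i}) :=
    isOpen_set_pi (Finset.finite_toSet _) fun _ _ => isOpen_discrete _
  obtain ⟨z', hz'U, hz'S⟩ := mem_closure_iff.1 hz _ hU fun i _ => rfl
  exact ⟨z', hz'S, fun i hi => hz'U i (by simp only [Finset.coe_Icc, Set.mem_Icc]; omega)⟩

lemma exists_ne_of_mem_Xsub {n m : ℕ} (hn : 1 ≤ n) (hnm : n < m) {x y : Bin}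
    (hx : x ∈ Xsub n) (hy : y ∈ Xsub m) : ∃ i : ℤ, i.natAbs ≤ 2 ^ (n + 1) ∧ x i ≠ y i := by
  obtain ⟨x', hx', hxx'⟩ := exists_eqOn_window_of_mem_closure hx (2 ^ (n + 1))
  obtain ⟨y', hy', hyy'⟩ := exists_eqOn_window_of_mem_closure hy (2 ^ (n + 1))
  have hq : (2 : ℤ) ≤ 2 ^ n := le_self_pow₀ (by norm_num) (by omega)
  have hqQ : (2 : ℤ) * 2 ^ n ≤ 2 ^ m := by
    rw [← pow_succ']; exact pow_le_pow_right₀ (by norm_num) hnm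
  have hL : ((2 ^ (n + 1) : ℕ) : ℤ) = 2 * 2 ^ n := by push_cast; ring
  obtain ⟨p, hp0, hpq, hp, hpq'⟩ := hx'.isMarkedBlocks.exists_ne_pair hq
  by_contra! hxy
  have hwin : ∀ j : ℤ, -1 ≤ j → j ≤ 2 * 2 ^ n → x' j = y' j := fun j hj1 hj2 => by
    have hj : j.natAbs ≤ 2 ^ (n + 1) := by omega
    rw [hxx' j hj, hyy' j hj, hxy j hj]
  rw [hwin _ (by linarith) (by linarith), hwin _ (by linarith) (by linarith)] at hp hpq'
  obtain ⟨c, hc⟩ := hy'.isMarkedBlocks.exists_const_of_ne (hq.trans (by linarith)) hp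
  refine hpq' ?_
  rw [show p + 2 ^ n - 1 = p + (2 ^ n - 1) by ring, hc _ (by linarith) (by linarith),
    hc _ (by linarith) (by linarith)]

def periodicPoint (w : List Bool) : Bin := fun i => w.getD (i % w.length).toNat false

lemma isFreeConcat_periodicPoint {W : Set (List Bool)} {w : List Bool} (hw : w ∈ W)
    (hne : w ≠ []) : IsFreeConcat W (periodicPoint w) := by
  have hℓ : (0 : ℤ) < w.length := by exact_mod_cast List.length_pos_iff.2 hne
  refine ⟨fun k => k * w.length, fun a b hab => mul_lt_mul_of_pos_right hab hℓ,
    fun N => ⟨|N| + 1, by nlinarith [le_abs_self N, abs_nonneg N]⟩,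
    fun N => ⟨-(|N| + 1), by nlinarith [neg_abs_le N, abs_nonneg N]⟩,
    fun k => ⟨w, hw, by ring, fun i hi => ?_⟩⟩
  have hmod : (k * w.length + i) % w.length = i := by
    rw [add_comm, Int.add_mul_emod_self_right]
    exact Int.emod_eq_of_lt (by positivity) (by exact_mod_cast hi)
  simp only [periodicPoint, hmod, Int.toNat_natCast, List.getD_eq_getElem _ _ hi,
    List.get_eq_getElem]

lemma exists_mem_Xsub_apply_zero_eq {m : ℕ} (hm : 1 ≤ m) (c : Bool) :
    ∃ y ∈ Xsub m, y 0 = c := by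
  have hw : List.replicate (2 ^ m - 1) c ++ [!c] ∈ genWords m := mem_genWords.2 ⟨c, rfl⟩
  refine ⟨_, subset_closure (isFreeConcat_periodicPoint hw (by simp)), ?_⟩
  obtain ⟨k, hk⟩ : ∃ k, 2 ^ m - 1 = k + 1 :=
    ⟨2 ^ m - 2, by have : 2 ≤ 2 ^ m := le_self_pow₀ (by norm_num) (by omega); omega⟩
  simp [periodicPoint, hk, List.replicate_succ]

lemma binDist_nonneg (x y : Bin) : 0 ≤ binDist x y := by
  unfold binDist; split_ifs <;> positivity

lemma binDist_self (x : Bin) : binDist x x = 0 := by simp [binDist]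

lemma binDist_le_half {x y : Bin} (h : x 0 = y 0) : binDist x y ≤ 1 / 2 := by
  unfold binDist
  split_ifs with hxy
  · norm_num
  have hne : ∃ i, x i ≠ y i := by
    by_contra! hc; exact hxy (funext hc)
  have h1 : 1 ≤ sInf {m : ℕ | ∃ i : ℤ, i.natAbs = m ∧ x i ≠ y i} := by
    refine Nat.one_le_iff_ne_zero.2 fun h0 => ?_
    obtain ⟨i, hi0, hi⟩ := Nat.sInf_mem (s := {m : ℕ | ∃ i : ℤ, i.natAbs = m ∧ x i ≠ y i})
      (let ⟨i, hi⟩ := hne; ⟨_, i, rfl, hi⟩)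
    rw [h0, Int.natAbs_eq_zero] at hi0
    exact hi (hi0 ▸ h)
  exact (pow_le_pow_of_le_one (by norm_num) (by norm_num) h1).trans_eq (pow_one _)

lemma pow_natAbs_le_binDist {x y : Bin} {i : ℤ} (h : x i ≠ y i) :
    (1 / 2 : ℝ) ^ i.natAbs ≤ binDist x y := by
  rw [binDist, if_neg fun he : x = y => h (he ▸ rfl)]
  exact pow_le_pow_of_le_one (by norm_num) (by norm_num) (Nat.sInf_le ⟨i, rfl, h⟩)

lemma distToSet_nonneg (x : Bin) (S : Set Bin) : 0 ≤ distToSet x S :=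
  Real.sInf_nonneg (by rintro _ ⟨y, -, rfl⟩; exact binDist_nonneg x y)

lemma distToSet_le {x y : Bin} {S : Set Bin} (hy : y ∈ S) : distToSet x S ≤ binDist x y :=
  csInf_le ⟨0, by rintro _ ⟨z, -, rfl⟩; exact binDist_nonneg x z⟩ ⟨y, hy, rfl⟩

lemma le_distToSet {x : Bin} {S : Set Bin} {a : ℝ} (hS : S.Nonempty)
    (h : ∀ y ∈ S, a ≤ binDist x y) : a ≤ distToSet x S :=
  le_csInf (hS.image _) (by rintro _ ⟨y, hy, rfl⟩; exact h y hy)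

lemma distToSet_eq_zero_of_mem {x : Bin} {S : Set Bin} (hx : x ∈ S) : distToSet x S = 0 :=
  ((distToSet_le hx).trans_eq (binDist_self x)).antisymm (distToSet_nonneg x S)

lemma distToSet_Xsub_le_half {m : ℕ} (hm : 1 ≤ m) (x : Bin) : distToSet x (Xsub m) ≤ 1 / 2 := by
  obtain ⟨y, hy, hy0⟩ := exists_mem_Xsub_apply_zero_eq hm (x 0)
  exact (distToSet_le hy).trans (binDist_le_half hy0.symm)

lemma pow_le_distToSet_Xsub {n m : ℕ} (hn : 1 ≤ n) (hnm : n < m) {x : Bin} (hx : x ∈ Xsub n) :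
    (1 / 2 : ℝ) ^ 2 ^ (n + 1) ≤ distToSet x (Xsub m) := by
  obtain ⟨y, hy, -⟩ := exists_mem_Xsub_apply_zero_eq (hn.trans hnm.le) true
  refine le_distToSet ⟨y, hy⟩ fun z hz => ?_
  obtain ⟨i, hi, hne⟩ := exists_ne_of_mem_Xsub hn hnm hx hz
  exact (pow_le_pow_of_le_one (by norm_num) (by norm_num) hi).trans (pow_natAbs_le_binDist hne)

lemma one_le_neg_logb_two {r : ℝ} (hr : 0 < r) (h : r ≤ 1 / 2) : 1 ≤ -Real.logb 2 r := by
  have : Real.logb 2 r ≤ -1 := by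
    rw [Real.logb_le_iff_le_rpow (by norm_num) hr, Real.rpow_neg_one]; linarith
  linarith

lemma deltaOf_nonneg {α r : ℝ} (hα : 0 < α) (h0 : 0 ≤ r) (h : r ≤ 1 / 2) :
    0 ≤ deltaOf α r := by
  rcases h0.eq_or_lt with rfl | hr
  · simp [deltaOf]
  have hj := one_le_neg_logb_two hr h
  rw [deltaOf, if_neg hr.ne']
  have := Real.logb_nonneg (by norm_num : (1 : ℝ) < 2) hj
  positivity

lemma div_le_deltaOf {α r : ℝ} {L : ℕ} (hα : 0 < α) (hL : (1 / 2 : ℝ) ^ L ≤ r)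
    (h : r ≤ 1 / 2) : 10 / (α * L) ≤ deltaOf α r := by
  have hr : 0 < r := (by positivity : (0 : ℝ) < (1 / 2) ^ L).trans_le hL
  set j := -Real.logb 2 r
  have hj1 : 1 ≤ j := one_le_neg_logb_two hr h
  have hjL : j ≤ L := by
    have : -(L : ℝ) ≤ Real.logb 2 r := by
      rw [Real.le_logb_iff_rpow_le (by norm_num) hr, Real.rpow_neg (by norm_num),
        Real.rpow_natCast, ← inv_pow, ← one_div]
      exact hL
    linarith
  calc 10 / (α * L) ≤ 10 / (α * j) := by gcongr
    _ ≤ (10 + 3 * Real.logb 2 j) / (α * j) := by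
      gcongr; linarith [Real.logb_nonneg (by norm_num : (1 : ℝ) < 2) hj1]
    _ = deltaOf α r := by rw [deltaOf, if_neg hr.ne']

def cseqTerm (β : ℕ → ℝ) (j : ℕ) : ℝ := 1 / (2 ^ (j + 1) * β j)

section Cseq

variable {β : ℕ → ℝ}

lemma cseq_eq_neg_tsum (n : ℕ) : cseq β n = -∑' k, cseqTerm β (n + k) := rfl

lemma cseqTerm_nonneg (hβ1 : 0 < β 1) (hβ : ∀ j, 1 ≤ j → β 1 ≤ β j) {j : ℕ} (hj : 1 ≤ j) :
    0 ≤ cseqTerm β j := by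
  have := hβ1.trans_le (hβ j hj)
  unfold cseqTerm; positivity

lemma cseqTerm_add_le (hβ1 : 0 < β 1) (hβ : ∀ j, 1 ≤ j → β 1 ≤ β j) {n : ℕ} (hn : 1 ≤ n)
    (k : ℕ) : cseqTerm β (n + k) ≤ 1 / (β 1 * 2 ^ n) / 2 / 2 ^ k := by
  rw [cseqTerm, div_div, div_div, mul_assoc, ← pow_succ', ← pow_add, mul_comm,
    show n + (k + 1) = n + k + 1 by ring]
  gcongr
  exact hβ _ (by omega)

lemma summable_cseqTerm (hβ1 : 0 < β 1) (hβ : ∀ j, 1 ≤ j → β 1 ≤ β j) {n : ℕ} (hn : 1 ≤ n) :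
    Summable fun k => cseqTerm β (n + k) :=
  (summable_geometric_two' _).of_nonneg_of_le (fun _ => cseqTerm_nonneg hβ1 hβ (by omega))
    (cseqTerm_add_le hβ1 hβ hn)

lemma cseq_nonpos (hβ1 : 0 < β 1) (hβ : ∀ j, 1 ≤ j → β 1 ≤ β j) {n : ℕ} (hn : 1 ≤ n) :
    cseq β n ≤ 0 :=
  neg_nonpos.2 (tsum_nonneg fun _ => cseqTerm_nonneg hβ1 hβ (by omega))

lemma neg_cseq_le (hβ1 : 0 < β 1) (hβ : ∀ j, 1 ≤ j → β 1 ≤ β j) {n : ℕ} (hn : 1 ≤ n) :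
    -cseq β n ≤ 1 / (β 1 * 2 ^ n) := by
  rw [cseq_eq_neg_tsum, neg_neg]
  calc ∑' k, cseqTerm β (n + k) ≤ ∑' k : ℕ, 1 / (β 1 * 2 ^ n) / 2 / 2 ^ k :=
        (summable_cseqTerm hβ1 hβ hn).tsum_le_tsum (cseqTerm_add_le hβ1 hβ hn)
          (summable_geometric_two' _)
    _ = 1 / (β 1 * 2 ^ n) := tsum_geometric_two' _

lemma cseq_le_cseq (hβ1 : 0 < β 1) (hβ : ∀ j, 1 ≤ j → β 1 ≤ β j) {m n : ℕ} (hm : 1 ≤ m)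
    (hmn : m ≤ n) : cseq β m ≤ cseq β n := by
  have htail := (summable_cseqTerm hβ1 hβ hm).sum_add_tsum_nat_add (n - m)
  have hshift : ∀ i, m + (i + (n - m)) = n + i := fun i => by omega
  simp only [hshift] at htail
  rw [cseq_eq_neg_tsum, cseq_eq_neg_tsum, ← htail, neg_le_neg_iff, le_add_iff_nonneg_left]
  exact Finset.sum_nonneg fun _ _ => cseqTerm_nonneg hβ1 hβ (by omega)

end Cseq

section Potential

variable {α : ℝ} {c : ℕ → ℝ} {x : Bin}

lemma phiN_eq_of_mem {n : ℕ} (hx : x ∈ Xsub n) : phiN α c n x = c n := by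
  simp [phiN, distToSet_eq_zero_of_mem hx, deltaOf]

lemma phiN_le (hα : 0 < α) {m : ℕ} (hm : 1 ≤ m) : phiN α c m x ≤ c m :=
  sub_le_self _ (deltaOf_nonneg hα (distToSet_nonneg _ _) (distToSet_Xsub_le_half hm x))

lemma phiN_le_sub_of_mem_Xsub (hα : 0 < α) {n m : ℕ} (hn : 1 ≤ n) (hnm : n < m)
    (hx : x ∈ Xsub n) : phiN α c m x ≤ c m - 10 / (α * 2 ^ (n + 1)) := by
  have := div_le_deltaOf hα (pow_le_distToSet_Xsub hn hnm hx)
    (distToSet_Xsub_le_half (hn.trans hnm.le) x)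
  push_cast at this
  exact sub_le_sub_left this _

end Potential

theorem phi_eq_on_Xsub_general (α : ℝ) (β : ℕ → ℝ) (hα : 0 < α) (hαβ : α < β 1)
    (hmono : ∀ m n : ℕ, 1 ≤ m → m < n → β m < β n)
    (n : ℕ) (hn : 1 ≤ n) (x : Bin) (hx : x ∈ Xsub n) :
    phi α (cseq β) x = cseq β n := by
  have hβ1 : 0 < β 1 := hα.trans hαβ
  have hβ : ∀ j, 1 ≤ j → β 1 ≤ β j := fun j hj =>
    hj.eq_or_lt.elim (fun h => h ▸ le_rfl) fun h => (hmono 1 j le_rfl h).le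
  have hle : ∀ m, 1 ≤ m → phiN α (cseq β) m x ≤ cseq β n := by
    intro m hm
    rcases le_or_gt m n with hmn | hnm
    · exact (phiN_le hα hm).trans (cseq_le_cseq hβ1 hβ hm hmn)
    calc phiN α (cseq β) m x ≤ cseq β m - 10 / (α * 2 ^ (n + 1)) :=
          phiN_le_sub_of_mem_Xsub hα hn hnm hx
      _ ≤ -(1 / (α * 2 ^ n)) := by
          have h10 : 10 / (α * 2 ^ (n + 1)) = 5 * (1 / (α * 2 ^ n)) := by
            rw [pow_succ]; field_simp; norm_num
          linarith [cseq_nonpos hβ1 hβ hm, (by positivity : 0 ≤ 1 / (α * 2 ^ n))]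
      _ ≤ -(1 / (β 1 * 2 ^ n)) := by gcongr
      _ ≤ cseq β n := neg_le.1 (neg_cseq_le hβ1 hβ hn)
  refine le_antisymm (ciSup_le fun k => hle (k + 1) k.succ_pos) ?_
  calc cseq β n = phiN α (cseq β) (n - 1 + 1) x := by rw [Nat.sub_add_cancel hn, phiN_eq_of_mem hx]
    _ ≤ ⨆ k : ℕ, phiN α (cseq β) (k + 1) x :=
      le_ciSup ⟨cseq β n, by rintro _ ⟨k, rfl⟩; exact hle (k + 1) k.succ_pos⟩ (n - 1)

/-- `φ` restricted to `X_n` is constantly `c_n`. -/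
theorem phi_eq_on_Xsub (α : ℝ) (β : ℕ → ℝ) (hα : 0 < α) (hαβ : α < β 1)
    (hpos : ∀ n : ℕ, 1 ≤ n → 0 < β n)
    (hmono : ∀ m n : ℕ, 1 ≤ m → m < n → β m < β n)
    (n : ℕ) (hn : 1 ≤ n) (x : Bin) (hx : x ∈ Xsub n) :
    phi α (cseq β) x = cseq β n :=
  phi_eq_on_Xsub_general α β hα hαβ hmono n hn x hx

end PhaseTransitions
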